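/- arXiv:2102.03432 — 2 statements merged into one kernel-verified Lean document; each statement's English description precedes it below -/
import Mathlib

section
/- For every dimension n ≥ 1, every signal variance σ_s² > 0 and every length scale l > 0, the exponential kernel k(x, y) = σ_s² · exp(−‖x − y‖ / l) on ℝⁿ, where ‖·‖ is the Euclidean norm, is a kernel: it is symmetric and positive semi-definite. -/
/-!
The distance `‖x - y‖` on a real inner product space is conditionally negative definite: up to
the positive constant `I = ∫ (1 - exp (-t²)) / t² dt` it is the mixture
`∫ (1 - exp (-t² ‖x - y‖²)) / t² dt` of the functions `1 - k_t`, where `k_t` are Gaussian kernels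
(a Gaussian kernel is a kernel because `exp (2s⟪x, y⟫)` is, by the exponential series and Schur's
product theorem). By Schoenberg's argument, for a conditionally negative definite `ψ` and a base
point `x₀` the function `ψ x x₀ + ψ x₀ y - ψ x y - ψ x₀ x₀` is a kernel, and exponentiating it
shows that `exp (-ψ)` is a kernel; take `ψ = ‖x - y‖ / l`.
-/

open Finset

/-- A kernel on a set `X`: a symmetric, positive semi-definite function `X × X → ℝ`. -/
def IsKernel {X : Type*} (k : X → X → ℝ) : Prop :=
  (∀ x y, k x y = k y x) ∧
  ∀ (n : ℕ) (x : Fin n → X) (c : Fin n → ℝ),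
    0 ≤ ∑ i, ∑ j, c i * c j * k (x i) (x j)

open Matrix MeasureTheory

lemma sum_sum_mul_mul_eq_star_dotProduct_mulVec {n : ℕ} (M : Fin n → Fin n → ℝ) (c : Fin n → ℝ) :
    ∑ i, ∑ j, c i * c j * M i j = star c ⬝ᵥ (Matrix.of M *ᵥ c) := by
  simp only [dotProduct, mulVec, Finset.mul_sum, star_trivial, of_apply]
  exact Finset.sum_congr rfl fun i _ => Finset.sum_congr rfl fun j _ => by ring

theorem isKernel_iff_posSemidef {X : Type*} {k : X → X → ℝ} :
    IsKernel k ↔ ∀ n (x : Fin n → X), (Matrix.of fun i j => k (x i) (x j)).PosSemidef := by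
  refine ⟨fun hk n x => .of_dotProduct_mulVec_nonneg ?_ fun c => ?_,
    fun hk => ⟨fun a b => ?_, fun n x c => ?_⟩⟩
  · ext i j
    exact hk.1 (x j) (x i)
  · rw [← sum_sum_mul_mul_eq_star_dotProduct_mulVec]
    exact hk.2 n x c
  · simpa using (hk 2 ![a, b]).isHermitian.apply 1 0
  · rw [sum_sum_mul_mul_eq_star_dotProduct_mulVec]
    exact (hk n x).dotProduct_mulVec_nonneg c

namespace IsKernel

variable {X : Type*} {k k' : X → X → ℝ}

theorem mul (hk : IsKernel k) (hk' : IsKernel k') : IsKernel fun x y => k x y * k' x y :=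
  isKernel_iff_posSemidef.2 fun n x =>
    (isKernel_iff_posSemidef.1 hk n x).hadamard (isKernel_iff_posSemidef.1 hk' n x)

theorem const_mul (hk : IsKernel k) {a : ℝ} (ha : 0 ≤ a) : IsKernel fun x y => a * k x y := by
  refine ⟨fun x y => by dsimp only; rw [hk.1], fun n x c => ?_⟩
  simp only [mul_left_comm _ a, ← Finset.mul_sum]
  exact mul_nonneg ha (hk.2 n x c)

theorem mul_apply_mul (hk : IsKernel k) (f : X → ℝ) : IsKernel fun x y => f x * f y * k x y := by
  refine ⟨fun x y => by dsimp only; rw [hk.1, mul_comm (f x)], fun n x c => ?_⟩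
  convert hk.2 n x (fun i => c i * f (x i)) using 3 with i - j -
  ring

theorem pow (hk : IsKernel k) (m : ℕ) : IsKernel fun x y => k x y ^ m := by
  induction m with
  | zero =>
    refine ⟨fun _ _ => rfl, fun n x c => ?_⟩
    simpa [← Finset.mul_sum, ← Finset.sum_mul] using mul_self_nonneg (∑ i, c i)
  | succ m ih => simpa only [pow_succ] using ih.mul hk

theorem exp (hk : IsKernel k) : IsKernel fun x y => Real.exp (k x y) := by
  refine ⟨fun x y => by dsimp only; rw [hk.1], fun n x c => ?_⟩
  have hsum : HasSum (fun m : ℕ => ∑ i, ∑ j, c i * c j * (k (x i) (x j) ^ m / m.factorial))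
      (∑ i, ∑ j, c i * c j * Real.exp (k (x i) (x j))) :=
    hasSum_sum fun i _ => hasSum_sum fun j _ => by
      have h : HasSum (fun m : ℕ => k (x i) (x j) ^ m / m.factorial)
          (Real.exp (k (x i) (x j))) := by
        rw [Real.exp_eq_exp_ℝ]
        exact NormedSpace.expSeries_div_hasSum_exp (k (x i) (x j))
      exact h.mul_left _
  refine hsum.nonneg fun m => ?_
  simp only [← mul_div_assoc, ← Finset.sum_div]
  exact div_nonneg ((hk.pow m).2 n x c) (Nat.cast_nonneg _)

end IsKernel

variable {E : Type*} [NormedAddCommGroup E] [InnerProductSpace ℝ E]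

theorem isKernel_inner : IsKernel fun x y : E => inner ℝ x y :=
  isKernel_iff_posSemidef.2 fun _ x => posSemidef_gram ℝ x

theorem isKernel_exp_neg_mul_norm_sub_sq {s : ℝ} (hs : 0 ≤ s) :
    IsKernel fun x y : E => Real.exp (-(s * ‖x - y‖ ^ 2)) := by
  have h := ((isKernel_inner.const_mul (by positivity : 0 ≤ 2 * s)).exp).mul_apply_mul
    fun x : E => Real.exp (-(s * ‖x‖ ^ 2))
  convert h using 3 with x y
  rw [← Real.exp_add, ← Real.exp_add, norm_sub_sq_real]
  ring_nf

def IsCondNegDef {X : Type*} (ψ : X → X → ℝ) : Prop :=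
  (∀ x y, ψ x y = ψ y x) ∧
  ∀ (n : ℕ) (x : Fin n → X) (c : Fin n → ℝ), ∑ i, c i = 0 →
    ∑ i, ∑ j, c i * c j * ψ (x i) (x j) ≤ 0

theorem IsKernel.isCondNegDef_const_sub {X : Type*} {k : X → X → ℝ} (hk : IsKernel k) (a : ℝ) :
    IsCondNegDef fun x y => a - k x y := by
  refine ⟨fun x y => by dsimp only; rw [hk.1], fun n x c hc => ?_⟩
  have h : ∑ i, ∑ j, c i * c j * (a - k (x i) (x j))
      = a * (∑ i, c i) ^ 2 - ∑ i, ∑ j, c i * c j * k (x i) (x j) := by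
    simp only [mul_sub, Finset.sum_sub_distrib, sq, Finset.sum_mul, Finset.mul_sum]
    congr 1
    exact Finset.sum_congr rfl fun i _ => Finset.sum_congr rfl fun j _ => by ring
  rw [h, hc]
  linarith [hk.2 n x c]

namespace IsCondNegDef

variable {X : Type*} {ψ : X → X → ℝ}

theorem const_mul (hψ : IsCondNegDef ψ) {a : ℝ} (ha : 0 ≤ a) :
    IsCondNegDef fun x y => a * ψ x y := by
  refine ⟨fun x y => by dsimp only; rw [hψ.1], fun n x c hc => ?_⟩
  simp only [mul_left_comm _ a, ← Finset.mul_sum]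
  exact mul_nonpos_of_nonneg_of_nonpos ha (hψ.2 n x c hc)

theorem integral {α : Type*} [MeasurableSpace α] {μ : Measure α} {ψ : α → X → X → ℝ}
    (hψ : ∀ a, IsCondNegDef (ψ a)) (hint : ∀ x y, Integrable (fun a => ψ a x y) μ) :
    IsCondNegDef fun x y => ∫ a, ψ a x y ∂μ := by
  refine ⟨fun x y => integral_congr_ae (.of_forall fun a => (hψ a).1 x y), fun n x c hc => ?_⟩
  have h : ∑ i, ∑ j, c i * c j * ∫ a, ψ a (x i) (x j) ∂μ
      = ∫ a, ∑ i, ∑ j, c i * c j * ψ a (x i) (x j) ∂μ := by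
    rw [integral_finsetSum _ fun i _ => integrable_finsetSum _ fun j _ => (hint _ _).const_mul _]
    refine Finset.sum_congr rfl fun i _ => ?_
    rw [integral_finsetSum _ fun j _ => (hint _ _).const_mul _]
    simp only [integral_const_mul]
  rw [h]
  exact integral_nonpos fun a => (hψ a).2 n x c hc

theorem isKernel_centered (hψ : IsCondNegDef ψ) (x₀ : X) :
    IsKernel fun x y => ψ x x₀ + ψ x₀ y - ψ x y - ψ x₀ x₀ := by
  refine ⟨fun x y => by dsimp only; rw [hψ.1 x x₀, hψ.1 x₀ y, hψ.1 x y]; ring, fun n x c => ?_⟩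
  -- Test `ψ` on the points `x₀, x 0, …` with the weights `-∑ i, c i, c 0, …`, which sum to zero.
  have h := hψ.2 (n + 1) (Fin.cons x₀ x) (Fin.cons (-∑ i, c i) c) (by simp [Fin.sum_univ_succ])
  simp only [Fin.sum_univ_succ, Fin.cons_zero, Fin.cons_succ] at h
  simp only [Finset.sum_add_distrib, Finset.sum_sub_distrib, Finset.mul_sum, Finset.sum_mul,
    mul_add, mul_sub, mul_neg, neg_mul, Finset.sum_neg_distrib] at h ⊢
  linarith [Finset.sum_comm (s := univ) (t := univ) (f := fun j i => c i * c j * ψ x₀ (x j)),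
    Finset.sum_comm (s := univ) (t := univ) (f := fun j i => c i * c j * ψ x₀ x₀)]

theorem isKernel_exp_neg (hψ : IsCondNegDef ψ) : IsKernel fun x y => Real.exp (-ψ x y) := by
  refine ⟨fun x y => by dsimp only; rw [hψ.1], fun n x c => ?_⟩
  rcases n with _ | n
  · simp
  have h := (hψ.isKernel_centered (x 0)).exp.mul_apply_mul
    fun y => Real.exp (ψ (x 0) (x 0) / 2 - ψ y (x 0))
  convert h.2 _ x c using 4 with i - j -
  dsimp only
  rw [← Real.exp_add, ← Real.exp_add, hψ.1 (x j) (x 0)]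
  ring_nf

end IsCondNegDef

theorem one_sub_exp_neg_mul_div_le {a x : ℝ} (ha : 0 ≤ a) (hx : 0 ≤ x) :
    (1 - Real.exp (-(x * a))) / x ≤ 2 * (1 + a) / (1 + x) := by
  rcases hx.eq_or_lt with rfl | hx
  · rw [div_zero]
    positivity
  rw [div_le_div_iff₀ hx (by positivity)]
  have h1 : 1 - Real.exp (-(x * a)) ≤ x * a := by linarith [Real.add_one_le_exp (-(x * a))]
  have h2 : 1 - Real.exp (-(x * a)) ≤ 1 := by linarith [Real.exp_pos (-(x * a))]
  rcases le_total x 1 with hx1 | hx1 <;> nlinarith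

theorem integrable_one_sub_exp_neg_mul_sq_div_sq (d : ℝ) :
    Integrable fun t : ℝ => (1 - Real.exp (-(t ^ 2 * d ^ 2))) / t ^ 2 := by
  have hmeas : Measurable fun t : ℝ => (1 - Real.exp (-(t ^ 2 * d ^ 2))) / t ^ 2 := by fun_prop
  refine (integrable_inv_one_add_sq.const_mul (2 * (1 + d ^ 2))).mono' hmeas.aestronglyMeasurable
    (.of_forall fun t => ?_)
  have hexp : Real.exp (-(t ^ 2 * d ^ 2)) ≤ 1 :=
    Real.exp_le_one_iff.2 (neg_nonpos.2 (by positivity))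
  rw [Real.norm_of_nonneg (div_nonneg (sub_nonneg.2 hexp) (sq_nonneg t))]
  simpa [div_eq_mul_inv] using one_sub_exp_neg_mul_div_le (sq_nonneg d) (sq_nonneg t)

theorem integral_one_sub_exp_neg_sq_div_sq_pos :
    0 < ∫ t : ℝ, (1 - Real.exp (-t ^ 2)) / t ^ 2 := by
  have hnonneg : ∀ t : ℝ, 0 ≤ (1 - Real.exp (-t ^ 2)) / t ^ 2 := fun t =>
    div_nonneg (sub_nonneg.2 (Real.exp_le_one_iff.2 (neg_nonpos.2 (sq_nonneg t)))) (sq_nonneg t)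
  rw [integral_pos_iff_support_of_nonneg hnonneg
    (by simpa using integrable_one_sub_exp_neg_mul_sq_div_sq 1)]
  have hsupp : Set.Ioi 0 ⊆ Function.support fun t : ℝ => (1 - Real.exp (-t ^ 2)) / t ^ 2 := by
    intro t (ht : 0 < t)
    simp only [Function.mem_support]
    have : Real.exp (-t ^ 2) < 1 := Real.exp_lt_one_iff.2 (neg_lt_zero.2 (by positivity))
    positivity
  exact (by simp : (0 : ENNReal) < volume (Set.Ioi (0 : ℝ))).trans_le (measure_mono hsupp)

theorem integral_one_sub_exp_neg_mul_sq_div_sq (d : ℝ) :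
    ∫ t : ℝ, (1 - Real.exp (-(t ^ 2 * d ^ 2))) / t ^ 2
      = |d| * ∫ t : ℝ, (1 - Real.exp (-t ^ 2)) / t ^ 2 := by
  have h : ∀ t : ℝ, (1 - Real.exp (-(t ^ 2 * d ^ 2))) / t ^ 2
      = d ^ 2 * ((1 - Real.exp (-(d * t) ^ 2)) / (d * t) ^ 2) := by
    intro t
    rcases eq_or_ne d 0 with rfl | hd
    · simp
    rw [mul_pow, ← mul_div_assoc, mul_div_mul_left _ _ (pow_ne_zero 2 hd), mul_comm (d ^ 2)]
  simp_rw [h]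
  rw [integral_const_mul,
    Measure.integral_comp_mul_left (fun t => (1 - Real.exp (-t ^ 2)) / t ^ 2), smul_eq_mul,
    ← mul_assoc, ← sq_abs, abs_inv]
  rcases eq_or_ne d 0 with rfl | hd
  · simp
  · field_simp

theorem isCondNegDef_norm_sub : IsCondNegDef fun x y : E => ‖x - y‖ := by
  have hgauss (t : ℝ) :
      IsCondNegDef fun x y : E => (1 - Real.exp (-(t ^ 2 * ‖x - y‖ ^ 2))) / t ^ 2 := by
    simpa only [div_eq_inv_mul] using
      ((isKernel_exp_neg_mul_norm_sub_sq (sq_nonneg t)).isCondNegDef_const_sub 1).const_mul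
        (inv_nonneg.2 (sq_nonneg t))
  have hI := integral_one_sub_exp_neg_sq_div_sq_pos
  have h := (IsCondNegDef.integral hgauss fun x y =>
    integrable_one_sub_exp_neg_mul_sq_div_sq ‖x - y‖).const_mul (inv_nonneg.2 hI.le)
  convert h using 3 with x y
  rw [integral_one_sub_exp_neg_mul_sq_div_sq, abs_norm, mul_comm ‖x - y‖,
    inv_mul_cancel_left₀ hI.ne']

theorem exponential_isKernel_general (n : ℕ) (σ2 l : ℝ)
    (hσ : 0 < σ2) (hl : 0 < l) :
    IsKernel (fun x y : EuclideanSpace ℝ (Fin n) =>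
      σ2 * Real.exp (-‖x - y‖ / l)) := by
  have hψ : IsCondNegDef fun x y : EuclideanSpace ℝ (Fin n) => l⁻¹ * ‖x - y‖ :=
    isCondNegDef_norm_sub.const_mul (inv_nonneg.2 hl.le)
  have h := hψ.isKernel_exp_neg.const_mul hσ.le
  simpa only [neg_div, div_eq_inv_mul, mul_neg] using h

/-- The exponential kernel `k x y = σ² exp (−‖x − y‖ / l)` on `ℝⁿ`
is a kernel for every signal variance `σ² > 0` and length scale `l > 0`. -/
theorem exponential_isKernel (n : ℕ) (hn : 1 ≤ n) (σ2 l : ℝ)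
    (hσ : 0 < σ2) (hl : 0 < l) :
    IsKernel (fun x y : EuclideanSpace ℝ (Fin n) =>
      σ2 * Real.exp (-‖x - y‖ / l)) :=
  exponential_isKernel_general n σ2 l hσ hl
end

section
/- Let Σ : ℝⁿ → (symmetric positive definite n × n real matrices) and σ_s : ℝⁿ → ℝ be arbitrary functions. Define Q(x, y) = (x − y)ᵀ ((Σ(x) + Σ(y))/2)⁻¹ (x − y) and the nonstationary kernel k(x, y) = (σ_s(x) σ_s(y) / √det((Σ(x) + Σ(y))/2)) · exp(−Q(x, y)). Then k is a kernel on ℝⁿ: it is symmetric and positive semi-definite. -/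
/-!
With `P x = Σ x / 2`, the Gaussians `φₓ u = exp (-(u - x)ᵀ (P x)⁻¹ (u - x))` satisfy, by completing
the square, `∫ φₓ φᵧ = π^(n/2) √(det P x · det P y / det (P x + P y)) · exp (-Q x y)`. Hence
`k x y = π^(-n/2) g x g y ∫ φₓ φᵧ` with `g = σ_s / √(det P)`, and a Gram kernel of this form is
positive semi-definite because `∑ cᵢ cⱼ ∫ φ_{xᵢ} φ_{xⱼ} = ∫ (∑ cᵢ φ_{xᵢ})² ≥ 0`.
-/

open Finset Matrix

open MeasureTheory Real

namespace Matrix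

section CommRing

variable {ι R : Type*} [Fintype ι] [CommRing R]

theorem IsSymm.dotProduct_mulVec_comm {M : Matrix ι ι R} (hM : M.IsSymm) (v w : ι → R) :
    v ⬝ᵥ M *ᵥ w = w ⬝ᵥ M *ᵥ v := by
  rw [dotProduct_mulVec, ← mulVec_transpose, hM.eq, dotProduct_comm]

theorem IsSymm.sub_dotProduct_mulVec_sub {M : Matrix ι ι R} (hM : M.IsSymm) (v w : ι → R) :
    (v - w) ⬝ᵥ M *ᵥ (v - w) = v ⬝ᵥ M *ᵥ v - 2 * (v ⬝ᵥ M *ᵥ w) + w ⬝ᵥ M *ᵥ w := by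
  rw [mulVec_sub, sub_dotProduct, dotProduct_sub, dotProduct_sub, hM.dotProduct_mulVec_comm w v]
  ring

theorem dotProduct_transpose_mul_mulVec (B : Matrix ι ι R) (u : ι → R) :
    u ⬝ᵥ (Bᵀ * B) *ᵥ u = (B *ᵥ u) ⬝ᵥ (B *ᵥ u) := by
  rw [← mulVec_mulVec, dotProduct_mulVec, vecMul_transpose]

variable [DecidableEq ι]

theorem IsSymm.exists_quadForm_add_quadForm_eq {A B : Matrix ι ι R} (hA : A.IsSymm)
    (hB : B.IsSymm) (hAB : IsUnit (A + B).det) (x y : ι → R) :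
    ∃ m, ∀ u, (u - x) ⬝ᵥ A *ᵥ (u - x) + (u - y) ⬝ᵥ B *ᵥ (u - y) =
      (u - m) ⬝ᵥ (A + B) *ᵥ (u - m) + (x - y) ⬝ᵥ (A * (A + B)⁻¹ * B) *ᵥ (x - y) := by
  set S := (A + B)⁻¹
  set d := x - y
  have hS : S.IsSymm := by rw [IsSymm, transpose_nonsing_inv, (hA.add hB).eq]
  have hABS : (A + B) * S = 1 := mul_nonsing_inv _ hAB
  have hSAB : S * (A + B) = 1 := nonsing_inv_mul _ hAB
  set w := S *ᵥ A *ᵥ d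
  refine ⟨y + w, fun u ↦ ?_⟩
  have hux : u - x = (u - y) - d := by simp [d]
  have hum : u - (y + w) = (u - y) - w := by abel
  have hw : (A + B) *ᵥ w = A *ᵥ d := by
    simp only [w, mulVec_mulVec, ← mul_assoc, hABS, one_mul]
  have hconst : w ⬝ᵥ (A + B) *ᵥ w + d ⬝ᵥ (A * S * B) *ᵥ d = d ⬝ᵥ A *ᵥ d := by
    calc w ⬝ᵥ (A + B) *ᵥ w + d ⬝ᵥ (A * S * B) *ᵥ d
        = (A *ᵥ d) ⬝ᵥ S *ᵥ (A *ᵥ d) + (A *ᵥ d) ⬝ᵥ S *ᵥ (B *ᵥ d) := by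
          rw [hw, dotProduct_comm, hS.dotProduct_mulVec_comm, ← mulVec_mulVec, ← mulVec_mulVec,
            hA.dotProduct_mulVec_comm, dotProduct_comm (S *ᵥ B *ᵥ d)]
      _ = d ⬝ᵥ A *ᵥ d := by
          rw [← dotProduct_add, ← mulVec_add, ← add_mulVec, mulVec_mulVec,
            hSAB, one_mulVec, dotProduct_comm]
  rw [hux, hum, hA.sub_dotProduct_mulVec_sub, (hA.add hB).sub_dotProduct_mulVec_sub,
    ← hconst, hw, add_mulVec, dotProduct_add]
  ring

end CommRing

section Field

variable {ι K : Type*} [Fintype ι] [DecidableEq ι] [Field K]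

theorem inv_mul_inv_add_inv_inv_mul_inv {P Q : Matrix ι ι K} (hP : P.det ≠ 0)
    (hQ : Q.det ≠ 0) : P⁻¹ * (P⁻¹ + Q⁻¹)⁻¹ * Q⁻¹ = (P + Q)⁻¹ := by
  rw [add_comm P⁻¹, inv_add_inv (by simp [isUnit_iff_isUnit_det, hP, hQ]), mul_inv_rev,
    mul_inv_rev, nonsing_inv_nonsing_inv _ hP.isUnit, nonsing_inv_nonsing_inv _ hQ.isUnit,
    add_comm Q, ← mul_assoc, ← mul_assoc, nonsing_inv_mul _ hP.isUnit, one_mul, mul_assoc,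
    mul_nonsing_inv _ hQ.isUnit, mul_one]

theorem det_inv_add_inv {P Q : Matrix ι ι K} (hP : P.det ≠ 0) (hQ : Q.det ≠ 0) :
    (P⁻¹ + Q⁻¹).det = (P + Q).det / (P.det * Q.det) := by
  rw [inv_add_inv (by simp [isUnit_iff_isUnit_det, hP, hQ]), det_mul, det_mul, det_nonsing_inv,
    det_nonsing_inv, Ring.inverse_eq_inv']
  ring

end Field

variable {ι : Type*} [Fintype ι] [DecidableEq ι]

open scoped MatrixOrder in
theorem PosSemidef.exists_eq_transpose_mul_self {M : Matrix ι ι ℝ} (hM : M.PosSemidef) :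
    ∃ B : Matrix ι ι ℝ, M = Bᵀ * B := by
  obtain ⟨B, hB⟩ := CStarAlgebra.nonneg_iff_eq_star_mul_self.mp hM.nonneg
  exact ⟨B, by rwa [star_eq_conjTranspose, conjTranspose_eq_transpose_of_trivial] at hB⟩

theorem measurableEmbedding_mulVec {B : Matrix ι ι ℝ} (hB : B.det ≠ 0) :
    MeasurableEmbedding (B *ᵥ ·) := by
  have : Invertible B := invertibleOfIsUnitDet B hB.isUnit
  exact (toLinearEquiv' B this).toContinuousLinearEquiv.toHomeomorph.measurableEmbedding

theorem map_mulVec_volume {B : Matrix ι ι ℝ} (hB : B.det ≠ 0) :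
    Measure.map (B *ᵥ ·) volume = ENNReal.ofReal |B.det|⁻¹ • (volume : Measure (ι → ℝ)) := by
  rw [← abs_inv, ← LinearMap.det_toLin' B, ← Measure.map_linearMap_addHaar_pi_eq_smul_addHaar]
  · rfl
  · rwa [LinearMap.det_toLin']

theorem integral_comp_mulVec {B : Matrix ι ι ℝ} (hB : B.det ≠ 0) (g : (ι → ℝ) → ℝ) :
    ∫ u, g (B *ᵥ u) = |B.det|⁻¹ * ∫ v, g v := by
  rw [← (measurableEmbedding_mulVec hB).integral_map, map_mulVec_volume hB, integral_smul_measure,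
    ENNReal.toReal_ofReal (by positivity), smul_eq_mul]

theorem integrable_comp_mulVec_iff {B : Matrix ι ι ℝ} (hB : B.det ≠ 0) {g : (ι → ℝ) → ℝ} :
    Integrable (fun u ↦ g (B *ᵥ u)) ↔ Integrable g := by
  rw [← Function.comp_def, ← (measurableEmbedding_mulVec hB).integrable_map_iff,
    map_mulVec_volume hB, integrable_smul_measure] <;> simp [hB]

end Matrix

section Gaussian

variable {ι : Type*} [Fintype ι]

theorem exp_neg_dotProduct_self (v : ι → ℝ) : rexp (-(v ⬝ᵥ v)) = ∏ i, rexp (-1 * v i ^ 2) := by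
  simp [dotProduct, ← exp_sum, sq]

theorem integrable_exp_neg_dotProduct_self : Integrable fun v : ι → ℝ ↦ rexp (-(v ⬝ᵥ v)) := by
  simp only [exp_neg_dotProduct_self]
  exact Integrable.fintype_prod fun _ ↦ integrable_exp_neg_mul_sq one_pos

theorem integral_exp_neg_dotProduct_self :
    ∫ v : ι → ℝ, rexp (-(v ⬝ᵥ v)) = √π ^ Fintype.card ι := by
  simp only [exp_neg_dotProduct_self]
  rw [integral_fintype_prod_volume_eq_pow (fun x : ℝ ↦ rexp (-1 * x ^ 2)), integral_gaussian,
    div_one]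

variable [DecidableEq ι]

theorem integrable_exp_neg_dotProduct_mulVec {M : Matrix ι ι ℝ} (hM : M.PosDef) :
    Integrable fun u ↦ rexp (-(u ⬝ᵥ M *ᵥ u)) := by
  obtain ⟨B, rfl⟩ := hM.posSemidef.exists_eq_transpose_mul_self
  have hB : B.det ≠ 0 := by simpa [det_mul] using hM.det_pos.ne'
  simpa only [dotProduct_transpose_mul_mulVec] using
    (integrable_comp_mulVec_iff hB).mpr integrable_exp_neg_dotProduct_self

theorem integral_exp_neg_dotProduct_mulVec {M : Matrix ι ι ℝ} (hM : M.PosDef) :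
    ∫ u, rexp (-(u ⬝ᵥ M *ᵥ u)) = √π ^ Fintype.card ι / √M.det := by
  obtain ⟨B, rfl⟩ := hM.posSemidef.exists_eq_transpose_mul_self
  have hB : B.det ≠ 0 := by simpa [det_mul] using hM.det_pos.ne'
  simp only [dotProduct_transpose_mul_mulVec]
  rw [integral_comp_mulVec hB (fun v ↦ rexp (-(v ⬝ᵥ v))), integral_exp_neg_dotProduct_self,
    det_mul, det_transpose, ← sq, sqrt_sq_eq_abs, inv_mul_eq_div]

theorem integrable_gaussian_mul_gaussian {A B : Matrix ι ι ℝ} (hA : A.PosDef) (hB : B.PosDef)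
    (x y : ι → ℝ) :
    Integrable fun u ↦ rexp (-((u - x) ⬝ᵥ A *ᵥ (u - x))) * rexp (-((u - y) ⬝ᵥ B *ᵥ (u - y))) := by
  obtain ⟨m, hm⟩ := IsSymm.exists_quadForm_add_quadForm_eq
    (isHermitian_iff_isSymm.mp hA.isHermitian) (isHermitian_iff_isSymm.mp hB.isHermitian)
    (hA.add hB).det_pos.ne'.isUnit x y
  simp_rw [← exp_add, ← neg_add, hm, neg_add, exp_add]
  exact ((integrable_exp_neg_dotProduct_mulVec (hA.add hB)).comp_sub_right m).mul_const _

theorem integral_gaussian_mul_gaussian {A B : Matrix ι ι ℝ} (hA : A.PosDef) (hB : B.PosDef)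
    (x y : ι → ℝ) :
    ∫ u, rexp (-((u - x) ⬝ᵥ A *ᵥ (u - x))) * rexp (-((u - y) ⬝ᵥ B *ᵥ (u - y))) =
      √π ^ Fintype.card ι / √(A + B).det *
        rexp (-((x - y) ⬝ᵥ (A * (A + B)⁻¹ * B) *ᵥ (x - y))) := by
  obtain ⟨m, hm⟩ := IsSymm.exists_quadForm_add_quadForm_eq
    (isHermitian_iff_isSymm.mp hA.isHermitian) (isHermitian_iff_isSymm.mp hB.isHermitian)
    (hA.add hB).det_pos.ne'.isUnit x y
  simp_rw [← exp_add, ← neg_add, hm, neg_add, exp_add]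
  rw [integral_mul_const, integral_sub_right_eq_self (fun u ↦ rexp (-(u ⬝ᵥ (A + B) *ᵥ u))),
    integral_exp_neg_dotProduct_mulVec (hA.add hB)]

theorem integral_gaussian_mul_gaussian_of_covariance {P Q : Matrix ι ι ℝ} (hP : P.PosDef)
    (hQ : Q.PosDef) (x y : ι → ℝ) :
    ∫ u, rexp (-((u - x) ⬝ᵥ P⁻¹ *ᵥ (u - x))) * rexp (-((u - y) ⬝ᵥ Q⁻¹ *ᵥ (u - y))) =
      √π ^ Fintype.card ι * √P.det * √Q.det / √(P + Q).det *
        rexp (-((x - y) ⬝ᵥ (P + Q)⁻¹ *ᵥ (x - y))) := by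
  have hPdet := hP.det_pos
  have hQdet := hQ.det_pos
  rw [integral_gaussian_mul_gaussian hP.inv hQ.inv,
    inv_mul_inv_add_inv_inv_mul_inv hPdet.ne' hQdet.ne', det_inv_add_inv hPdet.ne' hQdet.ne',
    sqrt_div' _ (by positivity), sqrt_mul hPdet.le]
  field_simp

end Gaussian

section Kernel

variable {X : Type*}

theorem isKernel_integral_mul {Ω : Type*} [MeasurableSpace Ω] {μ : Measure Ω}
    {f : X → Ω → ℝ} (hf : ∀ x y, Integrable (fun u ↦ f x u * f y u) μ) :
    IsKernel fun x y ↦ ∫ u, f x u * f y u ∂μ := by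
  refine ⟨fun x y ↦ by simp_rw [mul_comm], fun N p c ↦ ?_⟩
  calc 0 ≤ ∫ u, (∑ i, c i * f (p i) u) ^ 2 ∂μ := integral_nonneg fun _ ↦ sq_nonneg _
    _ = ∫ u, ∑ i, ∑ j, c i * c j * (f (p i) u * f (p j) u) ∂μ := by
        simp_rw [sq, sum_mul_sum, mul_mul_mul_comm]
    _ = ∑ i, ∑ j, c i * c j * ∫ u, f (p i) u * f (p j) u ∂μ := by
        rw [integral_finsetSum _ fun i _ ↦ integrable_finsetSum _ fun j _ ↦ (hf _ _).const_mul _]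
        simp_rw [integral_finsetSum _ fun j _ ↦ (hf _ _).const_mul _, integral_const_mul]

theorem IsKernel.apply_mul_apply_mul {k : X → X → ℝ} (hk : IsKernel k) (g : X → ℝ) :
    IsKernel fun x y ↦ g x * g y * k x y := by
  refine ⟨fun x y ↦ by simp only [hk.1 x y, mul_comm (g x)], fun N p c ↦ ?_⟩
  convert hk.2 N p (fun i ↦ c i * g (p i)) using 3 with i _ j _
  ring

theorem IsKernel.const_mul_s14 {k : X → X → ℝ} (hk : IsKernel k) {a : ℝ} (ha : 0 ≤ a) :
    IsKernel fun x y ↦ a * k x y := by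
  refine ⟨fun x y ↦ by simp only [hk.1 x y], fun N p c ↦ ?_⟩
  have := mul_nonneg ha (hk.2 N p c)
  rw [mul_sum] at this
  exact this.trans_eq (sum_congr rfl fun i _ ↦ by simp only [mul_sum, mul_left_comm a])

end Kernel

/-- The squared-exponential instance of the Paciorek–Risser nonstationary kernel:
`k x y = (σ x σ y / √det((Σ x + Σ y)/2)) exp (−Q x y)` with
`Q x y = (x − y)ᵀ ((Σ x + Σ y)/2)⁻¹ (x − y)`, where `Σ` maps each point to a
symmetric positive definite matrix and `σ` is arbitrary, is a kernel on `ℝⁿ`. -/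
theorem paciorek_nonstationary_isKernel {n : ℕ}
    (Sig : (Fin n → ℝ) → Matrix (Fin n) (Fin n) ℝ)
    (hSig : ∀ x, (Sig x).PosDef) (σs : (Fin n → ℝ) → ℝ) :
    IsKernel (fun x y : Fin n → ℝ =>
      σs x * σs y / Real.sqrt (((2 : ℝ)⁻¹ • (Sig x + Sig y)).det) *
        Real.exp (-((x - y) ⬝ᵥ ((2 : ℝ)⁻¹ • (Sig x + Sig y))⁻¹.mulVec (x - y)))) := by
  have hP : ∀ x, ((2 : ℝ)⁻¹ • Sig x).PosDef := fun x ↦ (hSig x).smul (by norm_num)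
  have hfeature := isKernel_integral_mul fun x y ↦
    integrable_gaussian_mul_gaussian (hP x).inv (hP y).inv x y
  convert (hfeature.apply_mul_apply_mul fun x ↦ σs x / √((2 : ℝ)⁻¹ • Sig x).det).const_mul_s14
    (a := (√π ^ n)⁻¹) (by positivity) using 3 with x y
  rw [integral_gaussian_mul_gaussian_of_covariance (hP x) (hP y), Fintype.card_fin, ← smul_add]
  have hx := sqrt_pos.2 (hP x).det_pos
  have hy := sqrt_pos.2 (hP y).det_pos
  generalize √((2 : ℝ)⁻¹ • Sig x).det = dx at hx ⊢
  generalize √((2 : ℝ)⁻¹ • Sig y).det = dy at hy ⊢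
  field_simp
end
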